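/- The generator unit e_G (G = 2^N) cannot belong to a zero-divisor dyad in the 2^{N+1}-ions: for any trip (a,b,c) of indices below G and sign sg ∈ {±1}, the product (e_a + e_G)·(e_b + sg·e_{G+c}) is nonzero. -/

import Mathlib

/-- The iterated Cayley-Dickson double of ℝ: `CD n` is the `2^n`-ions. -/
def CD : ℕ → Type
  | 0 => ℝ
  | n + 1 => CD n × CD n

def CD.zero : (n : ℕ) → CD n
  | 0 => (0 : ℝ)
  | n + 1 => (CD.zero n, CD.zero n)

def CD.one : (n : ℕ) → CD n
  | 0 => (1 : ℝ)
  | n + 1 => (CD.one n, CD.zero n)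

def CD.add : (n : ℕ) → CD n → CD n → CD n
  | 0, x, y => (show ℝ from x) + (show ℝ from y)
  | n + 1, (a, b), (c, d) => (CD.add n a c, CD.add n b d)

def CD.neg : (n : ℕ) → CD n → CD n
  | 0, x => -(show ℝ from x)
  | n + 1, (a, b) => (CD.neg n a, CD.neg n b)

def CD.conj : (n : ℕ) → CD n → CD n
  | 0, x => x
  | n + 1, (a, b) => (CD.conj n a, CD.neg n b)

/-- Cayley-Dickson product: `(a,b)(c,d) = (ac - d* b, da + b c*)`. -/
def CD.mul : (n : ℕ) → CD n → CD n → CD n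
  | 0, x, y => (show ℝ from x) * (show ℝ from y)
  | n + 1, (a, b), (c, d) =>
      (CD.add n (CD.mul n a c) (CD.neg n (CD.mul n (CD.conj n d) b)),
       CD.add n (CD.mul n d a) (CD.mul n b (CD.conj n c)))

def CD.smul : (n : ℕ) → ℝ → CD n → CD n
  | 0, r, x => r * (show ℝ from x)
  | n + 1, r, (a, b) => (CD.smul n r a, CD.smul n r b)

/-- The imaginary/basis unit of index `i` (for `i < 2^n`). -/
def CD.e : (n : ℕ) → ℕ → CD n
  | 0, _ => (1 : ℝ)
  | n + 1, i =>
      if i < 2 ^ n then (CD.e n i, CD.zero n) else (CD.zero n, CD.e n (i - 2 ^ n))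

instance (n : ℕ) : Zero (CD n) := ⟨CD.zero n⟩
instance (n : ℕ) : One (CD n) := ⟨CD.one n⟩
instance (n : ℕ) : Add (CD n) := ⟨CD.add n⟩
instance (n : ℕ) : Neg (CD n) := ⟨CD.neg n⟩
instance (n : ℕ) : Sub (CD n) := ⟨fun x y => CD.add n x (CD.neg n y)⟩
instance (n : ℕ) : Mul (CD n) := ⟨CD.mul n⟩
instance (n : ℕ) : SMul ℝ (CD n) := ⟨CD.smul n⟩



namespace CDAux

theorem xor_lt_pow (n x y : ℕ) (hx : x < 2^n) (hy : y < 2^n) : x ^^^ y < 2^n := by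
  apply Nat.lt_pow_two_of_testBit
  intro j hj
  rw [Nat.testBit_xor,
    Nat.testBit_lt_two_pow (lt_of_lt_of_le hx (Nat.pow_le_pow_right (by norm_num) hj)),
    Nat.testBit_lt_two_pow (lt_of_lt_of_le hy (Nat.pow_le_pow_right (by norm_num) hj))]
  rfl

theorem pow_xor_eq_add (n x : ℕ) (hx : x < 2^n) : 2^n ^^^ x = 2^n + x := by
  apply Nat.eq_of_testBit_eq
  intro j
  rcases lt_trichotomy j n with h | h | h
  · rw [Nat.testBit_xor, Nat.testBit_two_pow_of_ne (by omega), Nat.testBit_two_pow_add_gt h]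
    simp
  · subst h
    rw [Nat.testBit_xor, Nat.testBit_two_pow_self, Nat.testBit_two_pow_add_eq,
      Nat.testBit_lt_two_pow hx]
    rfl
  · have h1 : 2^n + x < 2^j := by
      have : 2 ^ (n+1) ≤ 2 ^ j := Nat.pow_le_pow_right (by norm_num) h
      have := Nat.pow_lt_pow_right (a := 2) (by norm_num) h
      omega
    rw [Nat.testBit_xor, Nat.testBit_two_pow_of_ne (by omega),
      Nat.testBit_lt_two_pow (lt_of_lt_of_le hx (le_of_lt (Nat.pow_lt_pow_right (by norm_num) h))),
      Nat.testBit_lt_two_pow h1]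
    rfl

/-- xor of a low part with a high element. -/
theorem xor_high (n x y : ℕ) (hx : x < 2^n) (hy : 2^n ≤ y) (hy2 : y < 2^(n+1)) :
    x ^^^ y = 2^n + (x ^^^ (y - 2^n)) := by
  have h1 : y - 2^n < 2^n := by
    have : 2^(n+1) = 2^n + 2^n := by ring
    omega
  calc x ^^^ y = x ^^^ (2^n ^^^ (y - 2^n)) := by
        rw [pow_xor_eq_add n _ h1]; congr 1; omega
    _ = 2^n ^^^ (x ^^^ (y - 2^n)) := by
        rw [← Nat.xor_assoc, Nat.xor_comm x (2^n), Nat.xor_assoc]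
    _ = 2^n + (x ^^^ (y - 2^n)) := pow_xor_eq_add n _ (xor_lt_pow n _ _ hx h1)

end CDAux

namespace CD

theorem add_zero' : ∀ (n : ℕ) (x : CD n), CD.add n x (CD.zero n) = x
  | 0, (x : ℝ) => by simp [CD.add, CD.zero] <;> rfl
  | n + 1, (a, b) => by simp [CD.add, CD.zero, add_zero' n] <;> rfl

theorem zero_add' : ∀ (n : ℕ) (x : CD n), CD.add n (CD.zero n) x = x
  | 0, (x : ℝ) => by simp [CD.add, CD.zero] <;> rfl
  | n + 1, (a, b) => by simp [CD.add, CD.zero, zero_add' n] <;> rfl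

theorem neg_zero' : ∀ (n : ℕ), CD.neg n (CD.zero n) = CD.zero n
  | 0 => by simp [CD.neg, CD.zero] <;> rfl
  | n + 1 => by simp [CD.neg, CD.zero, neg_zero' n] <;> rfl

theorem conj_zero' : ∀ (n : ℕ), CD.conj n (CD.zero n) = CD.zero n
  | 0 => by simp [CD.conj, CD.zero] <;> rfl
  | n + 1 => by simp [CD.conj, CD.zero, conj_zero' n, neg_zero' n] <;> rfl

theorem conj_one' : ∀ (n : ℕ), CD.conj n (CD.one n) = CD.one n
  | 0 => by simp [CD.conj, CD.one] <;> rfl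
  | n + 1 => by simp [CD.conj, CD.one, conj_one' n, neg_zero' n] <;> rfl

theorem neg_neg' : ∀ (n : ℕ) (x : CD n), CD.neg n (CD.neg n x) = x
  | 0, (x : ℝ) => by simp [CD.neg] <;> rfl
  | n + 1, (a, b) => by simp [CD.neg, neg_neg' n] <;> rfl

theorem neg_add' : ∀ (n : ℕ) (x y : CD n),
    CD.neg n (CD.add n x y) = CD.add n (CD.neg n x) (CD.neg n y)
  | 0, (x : ℝ), (y : ℝ) => by simp [CD.neg, CD.add]; ring <;> rfl
  | n + 1, (a, b), (c, d) => by simp [CD.neg, CD.add, neg_add' n] <;> rfl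

theorem conj_neg' : ∀ (n : ℕ) (x : CD n), CD.conj n (CD.neg n x) = CD.neg n (CD.conj n x)
  | 0, (x : ℝ) => by simp [CD.conj, CD.neg] <;> rfl
  | n + 1, (a, b) => by simp [CD.conj, CD.neg, conj_neg' n] <;> rfl

theorem mul_zero' : ∀ (n : ℕ) (x : CD n),
    CD.mul n (CD.zero n) x = CD.zero n ∧ CD.mul n x (CD.zero n) = CD.zero n
  | 0, (x : ℝ) => by simp [CD.mul, CD.zero] <;> rfl
  | n + 1, (a, b) => by
    simp [CD.mul, CD.zero, conj_zero' n, (mul_zero' n _).1, (mul_zero' n _).2,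
      neg_zero' n, add_zero' n] <;> rfl

theorem zero_mul (n : ℕ) (x : CD n) : CD.mul n (CD.zero n) x = CD.zero n := (mul_zero' n x).1
theorem mul_zero (n : ℕ) (x : CD n) : CD.mul n x (CD.zero n) = CD.zero n := (mul_zero' n x).2

theorem mul_one' : ∀ (n : ℕ) (x : CD n),
    CD.mul n (CD.one n) x = x ∧ CD.mul n x (CD.one n) = x
  | 0, (x : ℝ) => by simp [CD.mul, CD.one] <;> rfl
  | n + 1, (a, b) => by
    simp [CD.mul, CD.one, conj_zero' n, conj_one' n, (mul_one' n _).1, (mul_one' n _).2,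
      zero_mul n, mul_zero n, neg_zero' n, add_zero' n, zero_add' n] <;> rfl

theorem one_mul (n : ℕ) (x : CD n) : CD.mul n (CD.one n) x = x := (mul_one' n x).1
theorem mul_one (n : ℕ) (x : CD n) : CD.mul n x (CD.one n) = x := (mul_one' n x).2

theorem mul_neg' : ∀ (n : ℕ) (x y : CD n),
    CD.mul n (CD.neg n x) y = CD.neg n (CD.mul n x y) ∧
    CD.mul n x (CD.neg n y) = CD.neg n (CD.mul n x y)
  | 0, (x : ℝ), (y : ℝ) => by constructor <;> · simp [CD.mul, CD.neg]; try ring <;> rfl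
  | n + 1, (a, b), (c, d) => by
    constructor <;>
      simp [CD.mul, CD.neg, conj_neg' n, (mul_neg' n _ _).1, (mul_neg' n _ _).2,
        neg_add' n, neg_neg' n] <;> rfl

theorem neg_mul (n : ℕ) (x y : CD n) : CD.mul n (CD.neg n x) y = CD.neg n (CD.mul n x y) :=
  (mul_neg' n x y).1
theorem mul_neg (n : ℕ) (x y : CD n) : CD.mul n x (CD.neg n y) = CD.neg n (CD.mul n x y) :=
  (mul_neg' n x y).2

theorem smul_zero' : ∀ (n : ℕ) (r : ℝ), CD.smul n r (CD.zero n) = CD.zero n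
  | 0, r => by simp [CD.smul, CD.zero] <;> rfl
  | n + 1, r => by simp [CD.smul, CD.zero, smul_zero' n] <;> rfl

theorem one_smul' : ∀ (n : ℕ) (x : CD n), CD.smul n 1 x = x
  | 0, (x : ℝ) => by simp [CD.smul] <;> rfl
  | n + 1, (a, b) => by simp [CD.smul, one_smul' n] <;> rfl

theorem smul_neg' : ∀ (n : ℕ) (r : ℝ) (x : CD n), CD.smul n r (CD.neg n x) = CD.smul n (-r) x
  | 0, r, (x : ℝ) => by simp [CD.smul, CD.neg]; try ring <;> rfl
  | n + 1, r, (a, b) => by simp [CD.smul, CD.neg, smul_neg' n] <;> rfl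

theorem neg_smul' : ∀ (n : ℕ) (r : ℝ) (x : CD n), CD.neg n (CD.smul n r x) = CD.smul n (-r) x
  | 0, r, (x : ℝ) => by simp [CD.smul, CD.neg]; try ring <;> rfl
  | n + 1, r, (a, b) => by simp [CD.smul, CD.neg, neg_smul' n] <;> rfl

theorem conj_smul' : ∀ (n : ℕ) (r : ℝ) (x : CD n),
    CD.conj n (CD.smul n r x) = CD.smul n r (CD.conj n x)
  | 0, r, (x : ℝ) => by simp [CD.smul, CD.conj] <;> rfl
  | n + 1, r, (a, b) => by
    simp [CD.smul, CD.conj, conj_smul' n, smul_neg' n, neg_smul' n] <;> rfl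

theorem smul_add' : ∀ (n : ℕ) (r : ℝ) (x y : CD n),
    CD.add n (CD.smul n r x) (CD.smul n r y) = CD.smul n r (CD.add n x y)
  | 0, r, (x : ℝ), (y : ℝ) => by simp [CD.add, CD.smul]; try ring <;> rfl
  | n + 1, r, (a, b), (c, d) => by simp [CD.add, CD.smul, smul_add' n] <;> rfl

theorem add_smul' : ∀ (n : ℕ) (r s : ℝ) (x : CD n),
    CD.add n (CD.smul n r x) (CD.smul n s x) = CD.smul n (r + s) x
  | 0, r, s, (x : ℝ) => by simp [CD.add, CD.smul]; try ring <;> rfl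
  | n + 1, r, s, (a, b) => by simp [CD.add, CD.smul, add_smul' n] <;> rfl

theorem smul_mul' : ∀ (n : ℕ) (r : ℝ) (x y : CD n),
    CD.mul n (CD.smul n r x) y = CD.smul n r (CD.mul n x y) ∧
    CD.mul n x (CD.smul n r y) = CD.smul n r (CD.mul n x y)
  | 0, r, (x : ℝ), (y : ℝ) => by constructor <;> · simp [CD.mul, CD.smul]; try ring <;> rfl
  | n + 1, r, (a, b), (c, d) => by
    have h1 := fun x y => (smul_mul' n r x y).1
    have h2 := fun x y => (smul_mul' n r x y).2
    constructor <;>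
      simp [CD.mul, CD.smul, conj_smul' n, h1, h2, ← smul_add' n, smul_neg' n, neg_smul' n] <;> rfl

theorem smul_mul_left (n : ℕ) (r : ℝ) (x y : CD n) :
    CD.mul n (CD.smul n r x) y = CD.smul n r (CD.mul n x y) := (smul_mul' n r x y).1
theorem smul_mul_right (n : ℕ) (r : ℝ) (x y : CD n) :
    CD.mul n x (CD.smul n r y) = CD.smul n r (CD.mul n x y) := (smul_mul' n r x y).2

theorem e_low (n i : ℕ) (h : i < 2^n) : CD.e (n+1) i = (CD.e n i, CD.zero n) := by
  rw [CD.e]; exact if_pos h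

theorem e_high (n i : ℕ) (h : ¬ i < 2^n) : CD.e (n+1) i = (CD.zero n, CD.e n (i - 2^n)) := by
  rw [CD.e]; exact if_neg h

theorem e_zero' : ∀ (n : ℕ), CD.e n 0 = CD.one n
  | 0 => by simp [CD.e, CD.one] <;> rfl
  | n + 1 => by
    rw [e_low n 0 (Nat.two_pow_pos n), e_zero' n]; rfl

theorem conj_e' : ∀ (n : ℕ) (i : ℕ), 0 < i → i < 2^n →
    CD.conj n (CD.e n i) = CD.neg n (CD.e n i)
  | 0, i, hi, hi2 => by omega
  | n + 1, i, hi, hi2 => by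
    by_cases h : i < 2^n
    · rw [e_low n i h]
      simp [CD.conj, CD.neg, conj_e' n i hi h, neg_zero' n] <;> rfl
    · rw [e_high n i h]
      simp [CD.conj, CD.neg, conj_zero' n, neg_zero' n] <;> rfl

theorem e_ne_zero' : ∀ (n : ℕ) (i : ℕ), CD.e n i ≠ CD.zero n
  | 0, i => by
    show (1 : ℝ) ≠ (0 : ℝ)
    norm_num
  | n + 1, i => by
    by_cases h : i < 2^n
    · rw [e_low n i h]
      intro hc
      have hc' : ((CD.e n i, CD.zero n) : CD n × CD n) = (CD.zero n, CD.zero n) := hc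
      injection hc' with h1 h2
      exact e_ne_zero' n i h1
    · rw [e_high n i h]
      intro hc
      have hc' : ((CD.zero n, CD.e n (i - 2^n)) : CD n × CD n) = (CD.zero n, CD.zero n) := hc
      injection hc' with h1 h2
      exact e_ne_zero' n _ h2

theorem smul_eq_zero' : ∀ (n : ℕ) (r : ℝ) (x : CD n),
    CD.smul n r x = CD.zero n → r = 0 ∨ x = CD.zero n
  | 0, r, x, h => by
    have : r * (show ℝ from x) = 0 := h
    rcases mul_eq_zero.mp this with h | h
    · exact Or.inl h
    · exact Or.inr h
  | n + 1, r, (a, b), h => by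
    by_cases hr : r = 0
    · exact Or.inl hr
    · right
      have h' : ((CD.smul n r a, CD.smul n r b) : CD n × CD n) = (CD.zero n, CD.zero n) := h
      injection h' with ha' hb'
      have ha := (smul_eq_zero' n r a ha').resolve_left hr
      have hb := (smul_eq_zero' n r b hb').resolve_left hr
      show ((a, b) : CD n × CD n) = (CD.zero n, CD.zero n)
      rw [ha, hb]

end CD

namespace CDAux

/-- The sign of the product of basis units: `e_i * e_j = eps n i j • e_(i ^^^ j)`. -/
noncomputable def eps : ℕ → ℕ → ℕ → ℝ
  | 0, _, _ => 1
  | n+1, i, j =>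
    if i < 2^n then
      if j < 2^n then eps n i j else eps n (j - 2^n) i
    else
      if j < 2^n then (if j = 0 then 1 else -(eps n (i - 2^n) j))
      else (if j = 2^n then -1 else eps n (j - 2^n) (i - 2^n))

theorem eps_ll {n i j : ℕ} (hi : i < 2^n) (hj : j < 2^n) : eps (n+1) i j = eps n i j := by
  rw [eps, if_pos hi, if_pos hj]

theorem eps_lh {n i j : ℕ} (hi : i < 2^n) (hj : ¬ j < 2^n) :
    eps (n+1) i j = eps n (j - 2^n) i := by
  rw [eps, if_pos hi, if_neg hj]

theorem eps_hl {n i j : ℕ} (hi : ¬ i < 2^n) (hj : j < 2^n) (hj0 : j ≠ 0) :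
    eps (n+1) i j = -(eps n (i - 2^n) j) := by
  rw [eps, if_neg hi, if_pos hj, if_neg hj0]

theorem eps_hl0 {n i : ℕ} (hi : ¬ i < 2^n) : eps (n+1) i 0 = 1 := by
  rw [eps, if_neg hi, if_pos (Nat.two_pow_pos n), if_pos rfl]

theorem eps_hh {n i j : ℕ} (hi : ¬ i < 2^n) (hj : ¬ j < 2^n) (hj0 : j ≠ 2^n) :
    eps (n+1) i j = eps n (j - 2^n) (i - 2^n) := by
  rw [eps, if_neg hi, if_neg hj, if_neg hj0]

theorem eps_hh0 {n i : ℕ} (hi : ¬ i < 2^n) : eps (n+1) i (2^n) = -1 := by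
  rw [eps, if_neg hi, if_neg (by omega), if_pos rfl]

theorem eps_pm : ∀ (n i j : ℕ), eps n i j = 1 ∨ eps n i j = -1
  | 0, _, _ => Or.inl rfl
  | n+1, i, j => by
    rw [eps]
    split <;> split <;> try split
    all_goals first
      | exact Or.inl rfl
      | exact Or.inr rfl
      | exact eps_pm n _ _
      | · rcases eps_pm n (i - 2^n) j with h | h <;> rw [h] <;> simp

theorem eps_zero_right : ∀ (n i : ℕ), eps n i 0 = 1
  | 0, _ => rfl
  | n+1, i => by
    by_cases hi : i < 2^n
    · rw [eps_ll hi (Nat.two_pow_pos n)]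
      exact eps_zero_right n i
    · exact eps_hl0 hi

theorem eps_zero_left : ∀ (n j : ℕ), eps n 0 j = 1
  | 0, _ => rfl
  | n+1, j => by
    have h0 : (0:ℕ) < 2^n := Nat.two_pow_pos n
    by_cases hj : j < 2^n
    · rw [eps_ll h0 hj]; exact eps_zero_left n j
    · rw [eps_lh h0 hj]; exact eps_zero_right n _

theorem eps_self : ∀ (n i : ℕ), 0 < i → i < 2^n → eps n i i = -1
  | 0, i, hi, hi2 => by omega
  | n+1, i, hi, hi2 => by
    by_cases h : i < 2^n
    · rw [eps_ll h h]; exact eps_self n i hi h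
    · by_cases h0 : i = 2^n
      · subst h0; exact eps_hh0 h
      · rw [eps_hh h h h0]
        refine eps_self n _ (by omega) (by have := Nat.pow_succ 2 n; omega)

theorem eps_anticomm : ∀ (n i j : ℕ), 0 < i → 0 < j → i ≠ j → i < 2^n → j < 2^n →
    eps n i j = -eps n j i
  | 0, i, j, hi, hj, hij, hi2, hj2 => by omega
  | n+1, i, j, hi, hj, hij, hi2, hj2 => by
    have hpow : 2^(n+1) = 2^n + 2^n := by ring
    by_cases hil : i < 2^n <;> by_cases hjl : j < 2^n
    · rw [eps_ll hil hjl, eps_ll hjl hil]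
      exact eps_anticomm n i j hi hj hij hil hjl
    · rw [eps_lh hil hjl, eps_hl hjl hil (by omega)]
      ring
    · rw [eps_hl hil hjl (by omega), eps_lh hjl hil]
    · by_cases hjh : j = 2^n
      · subst hjh
        rw [eps_hh0 hil, eps_hh hjl hil (by omega), Nat.sub_self, eps_zero_right]
      · by_cases hih : i = 2^n
        · subst hih
          rw [eps_hh hil hjl hjh, Nat.sub_self, eps_zero_right, eps_hh0 hjl]
          norm_num
        · rw [eps_hh hil hjl hjh, eps_hh hjl hil hih]
          exact eps_anticomm n (j - 2^n) (i - 2^n) (by omega) (by omega) (by omega)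
            (by omega) (by omega)

theorem self_ne_xor {i b : ℕ} (hb : b ≠ 0) : i ≠ i ^^^ b := by
  intro h
  apply hb
  have h0 : i ^^^ 0 = i ^^^ b := by rw [Nat.xor_zero]; exact h
  exact (Nat.xor_right_inj.mp h0).symm

theorem xor_ne_self {b i : ℕ} (hb : b ≠ 0) : b ^^^ i ≠ i := by
  intro h
  apply hb
  apply Nat.xor_left_inj.mp
  rw [Nat.zero_xor]
  exact h

theorem xor_xor_cancel (h a b : ℕ) : (h ^^^ a) ^^^ (h ^^^ b) = a ^^^ b := by
  rw [Nat.xor_assoc, ← Nat.xor_assoc a h b, Nat.xor_comm a h, Nat.xor_assoc h a b,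
    xor_cancel_left]

theorem eps_cyc : ∀ (n i j : ℕ), 0 < i → 0 < j → i ≠ j → i < 2^n → j < 2^n →
    eps n i j = eps n j (i ^^^ j)
  | 0, i, j, hi, hj, hij, hi2, hj2 => by omega
  | n+1, i, j, hi, hj, hij, hi2, hj2 => by
    have hpow : 2^(n+1) = 2^n + 2^n := by ring
    by_cases hil : i < 2^n <;> by_cases hjl : j < 2^n
    · -- both low
      have hc : i ^^^ j < 2^n := xor_lt_pow n i j hil hjl
      rw [eps_ll hil hjl, eps_ll hjl hc]
      exact eps_cyc n i j hi hj hij hil hjl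
    · -- i low, j high
      have hj'lt : j - 2^n < 2^n := by omega
      have hx : i ^^^ j = 2^n + (i ^^^ (j - 2^n)) := xor_high n i j hil (by omega) hj2
      have hch : ¬ i ^^^ j < 2^n := by omega
      rw [eps_lh hil hjl]
      by_cases hc0 : i ^^^ (j - 2^n) = 0
      · -- i = j', c = 2^n
        have hi_eq : i = j - 2^n := xor_eq_zero_iff.mp hc0
        have hceq : i ^^^ j = 2^n := by omega
        rw [hceq, eps_hh0 hjl, ← hi_eq, eps_self n i hi hil]
      · have hcne : i ^^^ j ≠ 2^n := by omega
        rw [eps_hh hjl hch hcne,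
          show (i ^^^ j) - 2^n = i ^^^ (j - 2^n) by rw [hx, Nat.add_sub_cancel_left]]
        by_cases hj0 : j - 2^n = 0
        · rw [hj0, eps_zero_left, Nat.xor_zero, eps_zero_right]
        · have h1 := eps_cyc n (j - 2^n) i (by omega) hi (fun h => hc0 (by rw [h, Nat.xor_self])) hj'lt hil
          have h2 := eps_cyc n i (i ^^^ (j - 2^n)) hi (by omega) (self_ne_xor hj0) hil
            (xor_lt_pow n _ _ hil hj'lt)
          rw [h1, Nat.xor_comm (j - 2^n) i, h2, xor_cancel_left]
    · -- i high, j low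
      have hi'lt : i - 2^n < 2^n := by omega
      have hx : i ^^^ j = 2^n + (j ^^^ (i - 2^n)) := by
        rw [Nat.xor_comm]; exact xor_high n j i hjl (by omega) hi2
      have hch : ¬ i ^^^ j < 2^n := by omega
      rw [eps_hl hil hjl (by omega), eps_lh hjl hch,
        show (i ^^^ j) - 2^n = j ^^^ (i - 2^n) by rw [hx, Nat.add_sub_cancel_left]]
      by_cases hi0 : i - 2^n = 0
      · rw [hi0, eps_zero_left, Nat.xor_zero, eps_self n j hj hjl]
      · by_cases hij' : i - 2^n = j
        · rw [hij', Nat.xor_self, eps_zero_left, eps_self n j hj hjl]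
          norm_num
        · have h1 := eps_cyc n (i - 2^n) j (by omega) hj hij' hi'lt hjl
          have h2 := eps_anticomm n j ((i - 2^n) ^^^ j) hj
            (Nat.pos_of_ne_zero (mt xor_eq_zero_iff.mp hij'))
            (Ne.symm (xor_ne_self hi0)) hjl (xor_lt_pow n _ _ hi'lt hjl)
          rw [h1, h2, Nat.xor_comm j (i - 2^n), neg_neg]
    · -- both high
      have hi'lt : i - 2^n < 2^n := by omega
      have hj'lt : j - 2^n < 2^n := by omega
      have hxi : i = 2^n ^^^ (i - 2^n) := by rw [pow_xor_eq_add n _ hi'lt]; omega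
      have hxj : j = 2^n ^^^ (j - 2^n) := by rw [pow_xor_eq_add n _ hj'lt]; omega
      have hx : i ^^^ j = (i - 2^n) ^^^ (j - 2^n) := by
        conv_lhs => rw [hxi, hxj]
        exact xor_xor_cancel _ _ _
      have hij' : i - 2^n ≠ j - 2^n := by omega
      have hclt : i ^^^ j < 2^n := by
        rw [hx]; exact xor_lt_pow n _ _ hi'lt hj'lt
      have hc0 : i ^^^ j ≠ 0 := mt xor_eq_zero_iff.mp hij
      rw [eps_hl hjl hclt hc0, hx]
      by_cases hj0 : j - 2^n = 0
      · have : j = 2^n := by omega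
        subst this
        rw [eps_hh0 hil, hj0, eps_zero_left]
      · rw [eps_hh hil hjl (by omega)]
        by_cases hi0 : i - 2^n = 0
        · rw [hi0, eps_zero_right, Nat.zero_xor, eps_self n _ (by omega) hj'lt]
          norm_num
        · -- A := i - 2^n, B := j - 2^n, both nonzero and distinct
          have hA0 : i - 2^n ≠ 0 := hi0
          have hB0 : j - 2^n ≠ 0 := hj0
          have hBA : j - 2^n ≠ i - 2^n := Ne.symm hij'
          have hxne : (j - 2^n) ^^^ (i - 2^n) ≠ 0 := mt xor_eq_zero_iff.mp hBA
          calc eps n (j - 2^n) (i - 2^n)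
              = eps n (i - 2^n) ((j - 2^n) ^^^ (i - 2^n)) :=
                eps_cyc n (j - 2^n) (i - 2^n) (by omega) (by omega) hBA hj'lt hi'lt
            _ = eps n ((j - 2^n) ^^^ (i - 2^n)) ((i - 2^n) ^^^ ((j - 2^n) ^^^ (i - 2^n))) :=
                eps_cyc n (i - 2^n) ((j - 2^n) ^^^ (i - 2^n)) (by omega)
                  (Nat.pos_of_ne_zero hxne) (Ne.symm (xor_ne_self hB0)) hi'lt
                  (xor_lt_pow n _ _ hj'lt hi'lt)
            _ = eps n ((j - 2^n) ^^^ (i - 2^n)) (j - 2^n) := by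
                rw [Nat.xor_comm (j - 2^n) (i - 2^n), xor_cancel_left]
            _ = -eps n (j - 2^n) ((j - 2^n) ^^^ (i - 2^n)) :=
                eps_anticomm n ((j - 2^n) ^^^ (i - 2^n)) (j - 2^n)
                  (Nat.pos_of_ne_zero hxne) (by omega)
                  (Nat.xor_comm (j - 2^n) (i - 2^n) ▸ xor_ne_self hA0)
                  (xor_lt_pow n _ _ hj'lt hi'lt) hj'lt
            _ = -(eps n (j - 2^n) ((i - 2^n) ^^^ (j - 2^n))) := by
                rw [Nat.xor_comm (j - 2^n) (i - 2^n)]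

end CDAux

namespace CD
open CDAux

theorem smul_smul' : ∀ (n : ℕ) (r s : ℝ) (x : CD n),
    CD.smul n r (CD.smul n s x) = CD.smul n (r * s) x
  | 0, r, s, (x : ℝ) => by simp [CD.smul]; try ring <;> rfl
  | n + 1, r, s, (a, b) => by simp [CD.smul, smul_smul' n] <;> rfl

theorem neg_one_smul'' (n : ℕ) (x : CD n) : CD.smul n (-1) x = CD.neg n x := by
  rw [← neg_smul' n 1 x, one_smul' n x]

/-- The key multiplication rule for basis units. -/
theorem e_mul_e : ∀ (n i j : ℕ), i < 2^n → j < 2^n →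
    CD.mul n (CD.e n i) (CD.e n j) = CD.smul n (eps n i j) (CD.e n (i ^^^ j))
  | 0, i, j, hi, hj => by
    have hi0 : i = 0 := by omega
    have hj0 : j = 0 := by omega
    subst hi0; subst hj0
    simp [CD.mul, CD.smul, CD.e, eps] <;> rfl
  | n+1, i, j, hi, hj => by
    have hpow : 2^(n+1) = 2^n + 2^n := by ring
    by_cases hil : i < 2^n <;> by_cases hjl : j < 2^n
    · -- both low
      rw [e_low n i hil, e_low n j hjl, eps_ll hil hjl,
        e_low n _ (xor_lt_pow n i j hil hjl)]
      simp [CD.mul, CD.smul, conj_zero', mul_zero, zero_mul, neg_zero', add_zero',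
        zero_add', smul_zero', e_mul_e n i j hil hjl] <;> rfl
    · -- i low, j high
      have hj' : j - 2^n < 2^n := by omega
      have hx : i ^^^ j = 2^n + (i ^^^ (j - 2^n)) := xor_high n i j hil (by omega) hj
      rw [e_low n i hil, e_high n j hjl, eps_lh hil hjl, e_high n _ (by omega),
        show (i ^^^ j) - 2^n = i ^^^ (j - 2^n) from by rw [hx, Nat.add_sub_cancel_left]]
      simp [CD.mul, CD.smul, conj_zero', mul_zero, zero_mul, neg_zero', add_zero',
        zero_add', smul_zero', e_mul_e n (j - 2^n) i hj' hil, Nat.xor_comm] <;> rfl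
    · -- i high, j low
      have hi' : i - 2^n < 2^n := by omega
      rw [e_high n i hil, e_low n j hjl]
      by_cases hj0 : j = 0
      · subst hj0
        rw [Nat.xor_zero, eps_hl0 hil, e_high n i hil, e_zero']
        simp [CD.mul, CD.smul, conj_zero', conj_one', mul_zero, zero_mul, mul_one,
          neg_zero', add_zero', zero_add', smul_zero', one_smul'] <;> rfl
      · have hx : i ^^^ j = 2^n + ((i - 2^n) ^^^ j) := by
          rw [Nat.xor_comm]
          rw [xor_high n j i hjl (by omega) hi, Nat.xor_comm j (i - 2^n)]
        rw [eps_hl hil hjl hj0, e_high n _ (by omega),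
          show (i ^^^ j) - 2^n = (i - 2^n) ^^^ j from by rw [hx, Nat.add_sub_cancel_left]]
        simp [CD.mul, CD.smul, conj_zero', mul_zero, zero_mul, neg_zero', add_zero',
          zero_add', smul_zero', conj_e' n j (by omega) hjl, mul_neg,
          e_mul_e n (i - 2^n) j hi' hjl, neg_smul'] <;> rfl
    · -- both high
      have hi' : i - 2^n < 2^n := by omega
      have hj' : j - 2^n < 2^n := by omega
      have hxi : i = 2^n ^^^ (i - 2^n) := by rw [pow_xor_eq_add n _ hi']; omega
      have hxj : j = 2^n ^^^ (j - 2^n) := by rw [pow_xor_eq_add n _ hj']; omega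
      have hx : i ^^^ j = (i - 2^n) ^^^ (j - 2^n) := by
        conv_lhs => rw [hxi, hxj]
        exact xor_xor_cancel _ _ _
      have hclt : i ^^^ j < 2^n := by rw [hx]; exact xor_lt_pow n _ _ hi' hj'
      rw [e_high n i hil, e_high n j hjl, e_low n _ hclt, hx]
      by_cases hjh : j = 2^n
      · subst hjh
        rw [eps_hh0 hil, Nat.sub_self, Nat.xor_zero, e_zero']
        simp [CD.mul, CD.smul, conj_zero', conj_one', mul_zero, zero_mul, one_mul,
          neg_zero', add_zero', zero_add', smul_zero', neg_one_smul''] <;> rfl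
      · have hj'0 : j - 2^n ≠ 0 := by omega
        rw [eps_hh hil hjl hjh]
        simp [CD.mul, CD.smul, conj_zero', mul_zero, zero_mul, neg_zero', add_zero',
          zero_add', smul_zero', conj_e' n (j - 2^n) (by omega) hj', neg_mul, neg_neg',
          e_mul_e n (j - 2^n) (i - 2^n) hj' hi', Nat.xor_comm] <;> rfl

end CD


/-- Paper's Theorem 2: the generator unit `e_G` (`G = 2^N`) cannot belong to a
zero-divisor dyad: for any trip `(a,b,c)` of indices below `G` and sign `sg = ±1`,
the product `(e_a + e_G)(e_b + sg e_(G+c))` is nonzero. -/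
theorem generator_not_zero_divisor (N a b c : ℕ)
    (ha : 0 < a) (hb : 0 < b) (hc : 0 < c)
    (haN : a < 2 ^ N) (hbN : b < 2 ^ N) (hcN : c < 2 ^ N)
    (htrip : a ^^^ b = c)
    (sg : ℝ) (hsg : sg = 1 ∨ sg = -1) :
    (CD.e (N + 1) a + CD.e (N + 1) (2 ^ N)) *
      (CD.e (N + 1) b + sg • CD.e (N + 1) (2 ^ N + c)) ≠ 0 := by
  have hab : a ≠ b := by
    intro h; rw [h, Nat.xor_self] at htrip; omega
  have hca : c ^^^ a = b := by
    rw [← htrip, Nat.xor_comm a b]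
    exact xor_cancel_right b a
  have hbc : b ^^^ c = a := by
    rw [← htrip, Nat.xor_comm b (a ^^^ b)]
    exact xor_cancel_right a b
  -- the key sign identity: eps N c a = eps N a b
  have hkey : CDAux.eps N c a = CDAux.eps N a b := by
    have hbc' : b ≠ c := by intro h; rw [h, Nat.xor_self] at hbc; omega
    have h1 := CDAux.eps_cyc N a b ha hb hab haN hbN
    have h2 := CDAux.eps_cyc N b (a ^^^ b) hb (htrip ▸ hc) (htrip ▸ hbc') hbN
      (htrip ▸ hcN)
    rw [h1, h2, htrip, hbc]
  -- compute the two factors as pairs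
  have hX : CD.add (N+1) (CD.e (N+1) a) (CD.e (N+1) (2^N)) =
      ((CD.e N a, CD.one N) : CD N × CD N) := by
    rw [CD.e_low N a haN, CD.e_high N (2^N) (by omega), Nat.sub_self, CD.e_zero']
    show (CD.add N (CD.e N a) (CD.zero N), CD.add N (CD.zero N) (CD.one N)) = _
    rw [CD.add_zero', CD.zero_add']
  have hY : CD.add (N+1) (CD.e (N+1) b) (CD.smul (N+1) sg (CD.e (N+1) (2^N + c))) =
      ((CD.e N b, CD.smul N sg (CD.e N c)) : CD N × CD N) := by
    rw [CD.e_low N b hbN, CD.e_high N (2^N + c) (by omega), Nat.add_sub_cancel_left]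
    show (CD.add N (CD.e N b) (CD.smul N sg (CD.zero N)),
      CD.add N (CD.zero N) (CD.smul N sg (CD.e N c))) = _
    rw [CD.smul_zero', CD.add_zero', CD.zero_add']
  intro hzero
  have hz : CD.mul (N+1)
      ((CD.e N a, CD.one N) : CD N × CD N)
      ((CD.e N b, CD.smul N sg (CD.e N c)) : CD N × CD N) = CD.zero (N+1) := by
    rw [← hX, ← hY]; exact hzero
  have hz' : (CD.add N (CD.mul N (CD.e N a) (CD.e N b))
        (CD.neg N (CD.mul N (CD.conj N (CD.smul N sg (CD.e N c))) (CD.one N))),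
      CD.add N (CD.mul N (CD.smul N sg (CD.e N c)) (CD.e N a))
        (CD.mul N (CD.one N) (CD.conj N (CD.e N b)))) =
      ((CD.zero N, CD.zero N) : CD N × CD N) := hz
  -- simplify first component
  have hfst : CD.add N (CD.mul N (CD.e N a) (CD.e N b))
      (CD.neg N (CD.mul N (CD.conj N (CD.smul N sg (CD.e N c))) (CD.one N))) =
      CD.smul N (CDAux.eps N a b + sg) (CD.e N c) := by
    rw [CD.e_mul_e N a b haN hbN, htrip, CD.conj_smul', CD.conj_e' N c hc hcN,
      CD.smul_neg', CD.mul_one, CD.neg_smul']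
    rw [show (-(-sg)) = sg by ring, CD.add_smul']
  have hsnd : CD.add N (CD.mul N (CD.smul N sg (CD.e N c)) (CD.e N a))
      (CD.mul N (CD.one N) (CD.conj N (CD.e N b))) =
      CD.smul N (sg * CDAux.eps N c a + (-1)) (CD.e N b) := by
    rw [CD.smul_mul_left, CD.e_mul_e N c a hcN haN, hca, CD.smul_smul',
      CD.one_mul, CD.conj_e' N b hb hbN, ← CD.neg_one_smul'', CD.add_smul']
  rw [hfst, hsnd] at hz'
  have hz'' : CD.smul N (CDAux.eps N a b + sg) (CD.e N c) = CD.zero N ∧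
      CD.smul N (sg * CDAux.eps N c a + (-1)) (CD.e N b) = CD.zero N := by
    have := hz'
    injection this with h1 h2
    exact ⟨h1, h2⟩
  have hc1 : CDAux.eps N a b + sg = 0 :=
    (CD.smul_eq_zero' N _ _ hz''.1).resolve_right (CD.e_ne_zero' N c)
  have hc2 : sg * CDAux.eps N c a + (-1) = 0 :=
    (CD.smul_eq_zero' N _ _ hz''.2).resolve_right (CD.e_ne_zero' N b)
  rw [hkey] at hc2
  rcases hsg with h | h <;> rcases CDAux.eps_pm N a b with h' | h' <;>
    rw [h, h'] at hc1 hc2 <;> linarith
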